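/- Mean width of the compressible signal set: there is an absolute constant C > 0 such that for all integers 1 ≤ s ≤ n, the set K_{n,s} = {x ∈ R^n : ||x||_2 ≤ 1, ||x||_1 ≤ √s} = B_2^n ∩ √s B_1^n satisfies w(K_{n,s}) ≤ C √(s log(2n/s)). -/

import Mathlib

open MeasureTheory ProbabilityTheory Real
open scoped RealInnerProductSpace NNReal ENNReal Pointwise

noncomputable def stdGaussian (n : ℕ) : Measure (EuclideanSpace ℝ (Fin n)) :=
  Measure.map (⇑(EuclideanSpace.equiv (Fin n) ℝ).symm)
    (Measure.pi fun _ : Fin n => gaussianReal 0 1)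

noncomputable def meanWidth {n : ℕ} (K : Set (EuclideanSpace ℝ (Fin n))) : ℝ :=
  ∫ g, sSup ((fun z => ⟪g, z⟫) '' (K - K)) ∂(stdGaussian n)

/-! Split the coordinates of a Gaussian vector `g` at a threshold `t`. For `‖x‖₂ ≤ 1`, the
coordinates with `|gⱼ| > t` contribute at most the `ℓ²` norm of that part of `g` (Cauchy–Schwarz),
and the others at most `t ‖x‖₁ ≤ t √s`. AM-GM, `√a ≤ a / (2u) + u / 2`, makes the first bound
linear in `∑ⱼ gⱼ² 1{|gⱼ| > t}`, whose expectation is at most `24 n e^{-t²/4}` by comparison with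
the Gaussian moment `E e^{g²/3} = √3`. Taking `t = 2 √(log (2n/s))` and `u = t √s` gives
`w(K) ≤ 15 t √s = 30 √(s log (2n/s))`. -/

lemma sqrt_le_div_add_div {a u : ℝ} (ha : 0 ≤ a) (hu : 0 < u) :
    √a ≤ a / (2 * u) + u / 2 := by
  have key : 2 * u * √a ≤ a + u ^ 2 := by nlinarith [sq_nonneg (√a - u), Real.sq_sqrt ha]
  rw [div_add_div _ _ (by positivity) (by norm_num), le_div_iff₀ (by positivity)]
  nlinarith

lemma sSup_inner_image_sub_le {E : Type*} [NormedAddCommGroup E] [InnerProductSpace ℝ E]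
    {K : Set E} (hK : ∀ x ∈ K, -x ∈ K) (g : E) {b : ℝ} (hb : 0 ≤ b)
    (hgK : ∀ x ∈ K, ⟪g, x⟫ ≤ b) :
    sSup ((fun z => ⟪g, z⟫) '' (K - K)) ≤ 2 * b := by
  refine Real.sSup_le ?_ (by positivity)
  rintro _ ⟨_, ⟨x, hx, y, hy, rfl⟩, rfl⟩
  have hy' := hgK (-y) (hK y hy)
  rw [inner_neg_right] at hy'
  show ⟪g, x - y⟫ ≤ 2 * b
  rw [inner_sub_right]
  linarith [hgK x hx]

noncomputable def tailSq (t x : ℝ) : ℝ := if t < |x| then x ^ 2 else 0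

lemma tailSq_nonneg (t x : ℝ) : 0 ≤ tailSq t x := by
  unfold tailSq; split_ifs <;> positivity

lemma measurable_tailSq (t : ℝ) : Measurable (tailSq t) :=
  Measurable.ite (measurableSet_lt measurable_const measurable_abs)
    (measurable_id.pow_const 2) measurable_const

lemma inner_le_sqrt_sum_tailSq_add {ι : Type*} [Fintype ι] {t : ℝ} (ht : 0 ≤ t)
    (g : EuclideanSpace ℝ ι) {x : EuclideanSpace ℝ ι} (hx : ‖x‖ ≤ 1) :
    ⟪g, x⟫ ≤ √(∑ j, tailSq t (g j)) + t * ∑ j, |x j| := by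
  classical
  set S := Finset.univ.filter fun j => t < |g j|
  set T := Finset.univ.filter fun j => ¬ t < |g j|
  have hx2 : ∑ j ∈ S, x j ^ 2 ≤ 1 := by
    have : ∑ j, x j ^ 2 ≤ 1 := by
      simpa [EuclideanSpace.real_norm_sq_eq] using pow_le_one₀ (norm_nonneg x) hx (n := 2)
    exact (Finset.sum_le_sum_of_subset_of_nonneg (Finset.subset_univ _)
      fun j _ _ => sq_nonneg _).trans this
  have hhead : ∑ j ∈ S, g j * x j ≤ √(∑ j, tailSq t (g j)) := by
    calc ∑ j ∈ S, g j * x j ≤ √(∑ j ∈ S, g j ^ 2) * √(∑ j ∈ S, x j ^ 2) :=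
          Real.sum_mul_le_sqrt_mul_sqrt S _ _
      _ ≤ √(∑ j ∈ S, g j ^ 2) := by
          nlinarith [Real.sqrt_le_one.mpr hx2, Real.sqrt_nonneg (∑ j ∈ S, g j ^ 2)]
      _ = √(∑ j, tailSq t (g j)) := by rw [Finset.sum_filter]; rfl
  have htail : ∑ j ∈ T, g j * x j ≤ t * ∑ j, |x j| := by
    calc _ ≤ ∑ j ∈ T, t * |x j| := by
          refine Finset.sum_le_sum fun j hj => ?_
          have hgj : |g j| ≤ t := not_lt.mp (Finset.mem_filter.mp hj).2
          calc g j * x j ≤ |g j| * |x j| := by rw [← abs_mul]; exact le_abs_self _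
            _ ≤ t * |x j| := by gcongr
      _ ≤ ∑ j, t * |x j| := Finset.sum_le_sum_of_subset_of_nonneg (Finset.filter_subset _ _)
          fun j _ _ => mul_nonneg ht (abs_nonneg _)
      _ = t * ∑ j, |x j| := by rw [Finset.mul_sum]
  have hsplit : ⟪g, x⟫ = ∑ j ∈ S, g j * x j + ∑ j ∈ T, g j * x j := by
    rw [Finset.sum_filter_add_sum_filter_not]
    simp [PiLp.inner_apply, mul_comm]
  linarith

lemma integral_exp_mul_sq_gaussianReal {a : ℝ} (ha : a < 1 / 2) :
    ∫ x, exp (a * x ^ 2) ∂gaussianReal 0 1 = √(1 / (1 - 2 * a)) := by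
  have hb : 0 < 1 / 2 - a := by linarith
  calc ∫ x, exp (a * x ^ 2) ∂gaussianReal 0 1
      = ∫ x, (√(2 * π))⁻¹ * exp (-(1 / 2 - a) * x ^ 2) := by
        rw [integral_gaussianReal_eq_integral_smul one_ne_zero]
        congr 1 with x
        simp only [gaussianPDFReal, smul_eq_mul, NNReal.coe_one, mul_one, sub_zero, mul_assoc,
          ← exp_add]
        ring_nf
    _ = √(1 / (1 - 2 * a)) := by
        rw [integral_const_mul, integral_gaussian, ← sqrt_inv, ← sqrt_mul (by positivity)]
        congr 1
        field_simp

lemma integrable_exp_mul_sq_gaussianReal {a : ℝ} (ha : a < 1 / 2) :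
    Integrable (fun x => exp (a * x ^ 2)) (gaussianReal 0 1) := by
  refine Integrable.of_integral_ne_zero ?_
  rw [integral_exp_mul_sq_gaussianReal ha]
  have : 0 < 1 - 2 * a := by linarith
  positivity

lemma tailSq_le_exp (x : ℝ) {t : ℝ} (ht : 0 ≤ t) :
    tailSq t x ≤ 12 * exp (-t ^ 2 / 4) * exp (1 / 3 * x ^ 2) := by
  unfold tailSq
  split_ifs with h
  · have htx : t ^ 2 ≤ x ^ 2 := by nlinarith [sq_abs x, abs_nonneg x]
    have hpoly : x ^ 2 ≤ 12 * exp (x ^ 2 / 12) := by linarith [add_one_le_exp (x ^ 2 / 12)]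
    have hexp : exp (x ^ 2 / 12) ≤ exp (-t ^ 2 / 4) * exp (1 / 3 * x ^ 2) := by
      rw [← exp_add]; gcongr; linarith
    nlinarith
  · positivity

lemma integrable_tailSq_gaussianReal {t : ℝ} (ht : 0 ≤ t) :
    Integrable (tailSq t) (gaussianReal 0 1) :=
  ((integrable_exp_mul_sq_gaussianReal (a := 1 / 3) (by norm_num)).const_mul
      (12 * exp (-t ^ 2 / 4))).mono' (measurable_tailSq t).aestronglyMeasurable
    (ae_of_all _ fun x => by
      rw [norm_of_nonneg (tailSq_nonneg t x)]
      exact tailSq_le_exp x ht)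

lemma integral_tailSq_gaussianReal_le {t : ℝ} (ht : 0 ≤ t) :
    ∫ x, tailSq t x ∂gaussianReal 0 1 ≤ 24 * exp (-t ^ 2 / 4) := by
  have hsqrt3 : √3 ≤ 2 := by
    rw [sqrt_le_left (by norm_num)]; norm_num
  calc ∫ x, tailSq t x ∂gaussianReal 0 1
      ≤ ∫ x, 12 * exp (-t ^ 2 / 4) * exp (1 / 3 * x ^ 2) ∂gaussianReal 0 1 :=
        integral_mono (integrable_tailSq_gaussianReal ht)
          ((integrable_exp_mul_sq_gaussianReal (by norm_num)).const_mul _)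
          fun x => tailSq_le_exp x ht
    _ = 12 * √3 * exp (-t ^ 2 / 4) := by
        rw [integral_const_mul, integral_exp_mul_sq_gaussianReal (by norm_num)]
        norm_num
        ring
    _ ≤ 24 * exp (-t ^ 2 / 4) := by nlinarith [exp_pos (-t ^ 2 / 4)]

lemma stdGaussian_eq_map_toLp (n : ℕ) :
    stdGaussian n = (Measure.pi fun _ : Fin n => gaussianReal 0 1).map
      (MeasurableEquiv.toLp 2 (Fin n → ℝ)) := rfl

instance (n : ℕ) : IsProbabilityMeasure (stdGaussian n) :=
  Measure.isProbabilityMeasure_map (MeasurableEquiv.toLp 2 (Fin n → ℝ)).measurable.aemeasurable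

lemma integrable_sum_comp_apply_stdGaussian {n : ℕ} {f : ℝ → ℝ}
    (hf : Integrable f (gaussianReal 0 1)) :
    Integrable (fun g : EuclideanSpace ℝ (Fin n) => ∑ j, f (g j)) (stdGaussian n) := by
  rw [stdGaussian_eq_map_toLp, integrable_map_equiv]
  exact integrable_finsetSum _ fun j _ => integrable_comp_eval (i := j) hf

lemma integral_sum_comp_apply_stdGaussian {n : ℕ} {f : ℝ → ℝ}
    (hf : Integrable f (gaussianReal 0 1)) :
    ∫ g, ∑ j, f (g j) ∂stdGaussian n = n * ∫ x, f x ∂gaussianReal 0 1 := by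
  rw [stdGaussian_eq_map_toLp, integral_map_equiv]
  change ∫ x : Fin n → ℝ, ∑ j, f (x j) ∂_ = _
  rw [integral_finsetSum _ fun j _ => integrable_comp_eval (i := j) hf]
  simp [integral_comp_eval (μ := fun _ : Fin n => gaussianReal 0 1) hf.aestronglyMeasurable]

lemma meanWidth_ball_inter_l1Ball_le (n : ℕ) {R t u : ℝ} (hR : 0 ≤ R) (ht : 0 ≤ t)
    (hu : 0 < u) :
    meanWidth {x : EuclideanSpace ℝ (Fin n) | ‖x‖ ≤ 1 ∧ ∑ j, |x j| ≤ R} ≤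
      n * (24 * exp (-t ^ 2 / 4)) / u + u + 2 * t * R := by
  set K := {x : EuclideanSpace ℝ (Fin n) | ‖x‖ ≤ 1 ∧ ∑ j, |x j| ≤ R}
  set F := fun g : EuclideanSpace ℝ (Fin n) => (∑ j, tailSq t (g j)) / u + u + 2 * t * R
  have hsymm : ∀ x ∈ K, -x ∈ K := fun x hx => by simpa [K] using hx
  have hF : ∀ g, sSup ((fun z => ⟪g, z⟫) '' (K - K)) ≤ F g := by
    intro g
    have hsum := Finset.sum_nonneg fun j (_ : j ∈ Finset.univ) => tailSq_nonneg t (g j)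
    have hK : ∀ x ∈ K, ⟪g, x⟫ ≤ (∑ j, tailSq t (g j)) / (2 * u) + u / 2 + t * R :=
      fun x hx => calc
        ⟪g, x⟫ ≤ √(∑ j, tailSq t (g j)) + t * ∑ j, |x j| :=
          inner_le_sqrt_sum_tailSq_add ht g hx.1
        _ ≤ _ := by gcongr; exacts [sqrt_le_div_add_div hsum hu, hx.2]
    calc sSup ((fun z => ⟪g, z⟫) '' (K - K))
        ≤ 2 * ((∑ j, tailSq t (g j)) / (2 * u) + u / 2 + t * R) :=
          sSup_inner_image_sub_le hsymm g (by positivity) hK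
      _ = F g := by simp only [F]; field_simp
  have hX := integrable_sum_comp_apply_stdGaussian (n := n) (integrable_tailSq_gaussianReal ht)
  have hY : Integrable (fun g : EuclideanSpace ℝ (Fin n) => (∑ j, tailSq t (g j)) / u + u)
      (stdGaussian n) := (hX.div_const u).add (integrable_const u)
  have hEF : ∫ g, F g ∂stdGaussian n ≤ n * (24 * exp (-t ^ 2 / 4)) / u + u + 2 * t * R := by
    rw [integral_add hY (integrable_const _),
      integral_add (hX.div_const u) (integrable_const _), integral_div,
      integral_sum_comp_apply_stdGaussian (integrable_tailSq_gaussianReal ht), integral_const,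
      integral_const, probReal_univ, one_smul, one_smul]
    gcongr
    exact integral_tailSq_gaussianReal_le ht
  -- a non-integrable support function has Bochner integral `0`
  by_cases hint : Integrable (fun g => sSup ((fun z => ⟪g, z⟫) '' (K - K))) (stdGaussian n)
  · exact (integral_mono hint (hY.add (integrable_const _)) hF).trans hEF
  · rw [meanWidth, integral_undef hint]
    positivity

theorem meanWidth_compressible_set :
    ∃ C : ℝ, 0 < C ∧ ∀ n s : ℕ, 1 ≤ s → s ≤ n →
      meanWidth {x : EuclideanSpace ℝ (Fin n) |
          ‖x‖ ≤ 1 ∧ ∑ j, |x j| ≤ Real.sqrt s} ≤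
        C * Real.sqrt (s * Real.log (2 * n / s)) := by
  refine ⟨30, by norm_num, fun n s hs hsn => ?_⟩
  have hs0 : (0 : ℝ) < s := by exact_mod_cast hs
  have hsn' : (s : ℝ) ≤ n := by exact_mod_cast hsn
  have hn0 : (0 : ℝ) < n := hs0.trans_le hsn'
  set L := log (2 * n / s)
  have hL : 1 / 4 ≤ L := by
    have : (2 : ℝ) ≤ 2 * n / s := by rw [le_div_iff₀ hs0]; linarith
    linarith [log_two_gt_d9, log_le_log two_pos this]
  set t := 2 * √L
  have ht : 1 ≤ t := by
    have : √(1 / 4) ≤ √L := sqrt_le_sqrt hL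
    rw [show (1 / 4 : ℝ) = (1 / 2) ^ 2 by norm_num, sqrt_sq (by norm_num)] at this
    linarith
  have hexp : exp (-t ^ 2 / 4) = s / (2 * n) := by
    rw [mul_pow, sq_sqrt (by linarith), show -(2 ^ 2 * L) / 4 = -L by ring, exp_neg,
      exp_log (by positivity), inv_div]
  have ht0 : 0 < t := by linarith
  calc meanWidth _
      ≤ n * (24 * exp (-t ^ 2 / 4)) / (t * √s) + t * √s + 2 * t * √s :=
        meanWidth_ball_inter_l1Ball_le n (sqrt_nonneg _) ht0.le (by positivity)
    _ = 12 * (√s / t) + 3 * (t * √s) := by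
        rw [hexp]; field_simp; rw [sq_sqrt hs0.le]; ring
    _ ≤ 15 * (t * √s) := by
        have : √s / t ≤ t * √s := by
          rw [div_le_iff₀ ht0]
          nlinarith [mul_nonneg (sqrt_nonneg (s : ℝ)) (by nlinarith : 0 ≤ t * t - 1)]
        linarith
    _ = 30 * √(s * L) := by rw [sqrt_mul hs0.le]; ring
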